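/- Let p be a prime number and let R = 𝔽_p[ε] be the ring of dual numbers over 𝔽_p = ℤ/pℤ (so ε² = 0). Let C be the ℤ-indexed cochain complex of R-modules with C^n = R for every n ∈ ℤ and with every differential C^n → C^{n+1} given by multiplication by ε. Then the endomorphism ring of C in the homotopy category K(Mod R) is a one-dimensional vector space over 𝔽_p; more precisely, there is a ring isomorphism End_{K(Mod R)}(C) ≅ 𝔽_p. -/

import Mathlib

/-!
A chain endomorphism `f` of `C` is multiplication by some `aₙ ∈ k[ε]` in degree `n`, and
commuting with the differentials says `ε aₙ = ε aₙ₊₁`, i.e. all `aₙ` have the same constant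
term `c`. A homotopy given by multiplication by `sₙ` changes `aₙ` by `ε (sₙ + sₙ₊₁)`; since the
equations `sₙ + sₙ₊₁ = bₙ` can be solved recursively in both directions, `f` is homotopic to
multiplication by `c`, while `ε`-multiples do not change `c`. So `[f] ↦ c` identifies
`End_{K(Mod k[ε])}(C)` with `k`, for every commutative ring `k`.
-/

open CategoryTheory CategoryTheory.Limits DualNumber

namespace Paper9

/-- The cochain complex of `R`-modules which is `R` in every degree and whose differentials
are all given by multiplication by a fixed element `r` with `r * r = 0`. -/
noncomputable def Cx (R : Type) [CommRing R] (r : R) (h : r * r = 0) :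
    CochainComplex (ModuleCat R) ℤ :=
  CochainComplex.of (fun _ => ModuleCat.of R R)
    (fun _ => ModuleCat.ofHom (r • LinearMap.id))
    (fun _ => by
      refine ModuleCat.hom_ext (LinearMap.ext fun x => ?_)
      show r • (r • x) = 0
      rw [smul_smul, h, zero_smul])

section AdjacentSums

variable {A : Type*} [AddCommGroup A]

def adjacentSumSolution (b : ℤ → A) : ℤ → A
  | 0 => 0
  | (n : ℕ) + 1 => b n - adjacentSumSolution b n
  | Int.negSucc m => b (Int.negSucc m) - adjacentSumSolution b (-m)
termination_by n => n.natAbs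

theorem adjacentSumSolution_add_add_one (b : ℤ → A) (n : ℤ) :
    adjacentSumSolution b n + adjacentSumSolution b (n + 1) = b n := by
  cases n with
  | ofNat n =>
    rw [Int.ofNat_eq_natCast, show (n : ℤ) + 1 = Int.ofNat n.succ from rfl,
      adjacentSumSolution.eq_2]
    abel
  | negSucc m =>
    rw [adjacentSumSolution.eq_3, show Int.negSucc m + 1 = -m by omega]
    abel

end AdjacentSums

namespace Cx

variable {R : Type} [CommRing R] {r : R} {h : r * r = 0} {i j l : ℤ}

noncomputable def coeff (g : (Cx R r h).X i ⟶ (Cx R r h).X j) : R := g (1 : R)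

theorem hom_apply (g : (Cx R r h).X i ⟶ (Cx R r h).X j) (x : R) :
    (g x : R) = x * coeff g := by
  conv_lhs => rw [← mul_one x]
  exact g.hom.map_smul x (1 : R)

theorem hom_ext {g g' : (Cx R r h).X i ⟶ (Cx R r h).X j} (hg : coeff g = coeff g') : g = g' :=
  ModuleCat.hom_ext (LinearMap.ext_ring hg)

@[simp]
theorem coeff_comp (g : (Cx R r h).X i ⟶ (Cx R r h).X j)
    (g' : (Cx R r h).X j ⟶ (Cx R r h).X l) : coeff (g ≫ g') = coeff g * coeff g' :=
  hom_apply g' (coeff g)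

@[simp]
theorem coeff_zero : coeff (0 : (Cx R r h).X i ⟶ (Cx R r h).X j) = 0 := rfl

@[simp]
theorem coeff_add (g g' : (Cx R r h).X i ⟶ (Cx R r h).X j) :
    coeff (g + g') = coeff g + coeff g' := rfl

@[simp]
theorem coeff_sub (g g' : (Cx R r h).X i ⟶ (Cx R r h).X j) :
    coeff (g - g') = coeff g - coeff g' := rfl

theorem coeff_d (hij : i + 1 = j) : coeff ((Cx R r h).d i j) = r := by
  subst hij
  have hd : (Cx R r h).d i (i + 1) = ModuleCat.ofHom (r • LinearMap.id) :=
    CochainComplex.of_d (fun _ => ModuleCat.of R R) (fun _ => ModuleCat.ofHom (r • LinearMap.id)) i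
  rw [coeff, hd]
  exact mul_one r

@[simp]
theorem coeff_smul_id_f (a : R) (n : ℤ) : coeff ((a • 𝟙 (Cx R r h)).f n) = a :=
  mul_one a

noncomputable def mulHom (a : R) : (Cx R r h).X i ⟶ (Cx R r h).X j :=
  ModuleCat.ofHom (a • LinearMap.id)

@[simp]
theorem coeff_mulHom (a : R) : coeff (mulHom a : (Cx R r h).X i ⟶ (Cx R r h).X j) = a :=
  mul_one a

theorem mul_coeff_f_eq (f : Cx R r h ⟶ Cx R r h) (n : ℤ) :
    r * coeff (f.f n) = r * coeff (f.f (n + 1)) := by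
  have hcomm := congrArg coeff (f.comm n (n + 1))
  rwa [coeff_comp, coeff_comp, coeff_d rfl, mul_comm] at hcomm

theorem dvd_coeff_sub_of_homotopy {f g : Cx R r h ⟶ Cx R r h} (H : Homotopy f g) (n : ℤ) :
    r ∣ coeff (f.f n) - coeff (g.f n) := by
  have hcomm := congrArg coeff (H.comm n)
  rw [dNext_eq _ (show n + 1 = n + 1 from rfl), prevD_eq _ (sub_add_cancel n 1)] at hcomm
  simp only [coeff_add, coeff_comp, coeff_d rfl, coeff_d (sub_add_cancel n 1)] at hcomm
  exact ⟨coeff (H.hom (n + 1) n) + coeff (H.hom n (n - 1)), by rw [hcomm]; ring⟩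

theorem sub_eq_nullHomotopicMap' {f g : Cx R r h ⟶ Cx R r h} (s : ℤ → R)
    (hs : ∀ n, coeff (f.f n) = r * (s n + s (n + 1)) + coeff (g.f n)) :
    f - g = Homotopy.nullHomotopicMap' (C := Cx R r h) (D := Cx R r h)
      fun i _ _ => mulHom (s i) := by
  refine HomologicalComplex.hom_ext _ _ fun n => hom_ext ?_
  rw [Homotopy.nullHomotopicMap'_f (sub_add_cancel n 1) (show n + 1 = n + 1 from rfl)]
  simp only [HomologicalComplex.sub_f_apply, coeff_sub, coeff_add, coeff_comp, coeff_mulHom,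
    coeff_d rfl, coeff_d (sub_add_cancel n 1), hs n]
  ring

noncomputable def homotopyOfCoeff {f g : Cx R r h ⟶ Cx R r h} (s : ℤ → R)
    (hs : ∀ n, coeff (f.f n) = r * (s n + s (n + 1)) + coeff (g.f n)) : Homotopy f g :=
  Homotopy.equivSubZero.symm
    ((Homotopy.ofEq (sub_eq_nullHomotopicMap' s hs)).trans (Homotopy.nullHomotopy' _))

end Cx

namespace DualNumber

variable {k : Type*} [Semiring k]

theorem eps_mul_eq_inr (x : k[ε]) : ε * x = TrivSqZeroExt.inr x.fst := by
  ext <;> simp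

theorem fst_eq_of_eps_mul_eq {x y : k[ε]} (hxy : ε * x = ε * y) : x.fst = y.fst := by
  rw [eps_mul_eq_inr, eps_mul_eq_inr] at hxy
  exact TrivSqZeroExt.inr_injective hxy

theorem fst_eq_zero_of_eps_dvd {x : k[ε]} (hx : ε ∣ x) : x.fst = 0 := by
  obtain ⟨y, rfl⟩ := hx
  rw [eps_mul_eq_inr, TrivSqZeroExt.fst_inr]

end DualNumber

namespace DualCx

open Cx

variable {k : Type} [CommRing k]

local notation "C" => Cx k[ε] ε eps_mul_eps

local notation "Q" => HomotopyCategory.quotient (ModuleCat k[ε]) (ComplexShape.up ℤ)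

noncomputable def scalar (f : C ⟶ C) : k := (coeff (f.f 0)).fst

theorem fst_coeff_f (f : C ⟶ C) (n : ℤ) : (coeff (f.f n)).fst = scalar f := by
  induction n using Int.induction_on with
  | zero => rfl
  | succ n ih => rw [← ih, DualNumber.fst_eq_of_eps_mul_eq (mul_coeff_f_eq f n)]
  | pred n ih =>
    rw [← ih, DualNumber.fst_eq_of_eps_mul_eq (mul_coeff_f_eq f (-n - 1)), sub_add_cancel]

@[simp]
theorem scalar_zero : scalar (0 : C ⟶ C) = 0 := by
  rw [scalar, HomologicalComplex.zero_f_apply, coeff_zero, TrivSqZeroExt.fst_zero]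

@[simp]
theorem scalar_smul_id (a : k[ε]) : scalar (a • 𝟙 C) = a.fst := by
  rw [scalar, coeff_smul_id_f]

theorem scalar_eq_of_homotopy {f g : C ⟶ C} (H : Homotopy f g) : scalar f = scalar g := by
  have hfst := DualNumber.fst_eq_zero_of_eps_dvd (dvd_coeff_sub_of_homotopy H 0)
  rwa [TrivSqZeroExt.fst_sub, sub_eq_zero] at hfst

noncomputable def homotopyScalarSmulId (f : C ⟶ C) :
    Homotopy f ((TrivSqZeroExt.inl (scalar f) : k[ε]) • 𝟙 C) :=
  homotopyOfCoeff
    (fun n => TrivSqZeroExt.inl (adjacentSumSolution (fun m => (coeff (f.f m)).snd) n))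
    fun n => by
      rw [← TrivSqZeroExt.inl_add, DualNumber.eps_mul_eq_inr, TrivSqZeroExt.fst_inl,
        adjacentSumSolution_add_add_one, coeff_smul_id_f, ← fst_coeff_f f n, add_comm,
        TrivSqZeroExt.inl_fst_add_inr_snd_eq]

theorem quotient_map_smul_id (a : k[ε]) :
    (Q).map (a • 𝟙 C) = algebraMap k[ε] (End ((Q).obj C)) a := by
  refine ((Q).map_smul a (𝟙 C)).trans ?_
  rw [CategoryTheory.Functor.map_id, Algebra.algebraMap_eq_smul_one]
  rfl

noncomputable def smulIdRingHom : k →+* End ((Q).obj C) :=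
  (algebraMap k[ε] (End ((Q).obj C))).comp (TrivSqZeroExt.inlHom k k)

theorem smulIdRingHom_apply (c : k) :
    smulIdRingHom c = (Q).map ((TrivSqZeroExt.inl c : k[ε]) • 𝟙 C) :=
  (quotient_map_smul_id _).symm

theorem smulIdRingHom_bijective : Function.Bijective (smulIdRingHom (k := k)) := by
  refine ⟨(injective_iff_map_eq_zero _).2 fun c hc => ?_, fun x => ?_⟩
  · rw [smulIdRingHom_apply, HomotopyCategory.quotient_map_eq_zero_iff] at hc
    obtain ⟨H⟩ := hc
    simpa using scalar_eq_of_homotopy H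
  · obtain ⟨f, rfl⟩ := (Q).map_surjective x
    exact ⟨scalar f, by
      rw [smulIdRingHom_apply, HomotopyCategory.eq_of_homotopy _ _ (homotopyScalarSmulId f)]⟩

noncomputable def endRingEquiv : End ((Q).obj C) ≃+* k :=
  (RingEquiv.ofBijective _ smulIdRingHom_bijective).symm

end DualCx

theorem statement9_general (p : ℕ) :
    Nonempty
      (End ((HomotopyCategory.quotient (ModuleCat (DualNumber (ZMod p)))
          (ComplexShape.up ℤ)).obj
        (Cx (DualNumber (ZMod p)) ε eps_mul_eps)) ≃+* ZMod p) :=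
  ⟨DualCx.endRingEquiv⟩

/-- Let `p` be a prime and `R = 𝔽_p[ε]` the ring of dual numbers over `𝔽_p = ℤ/pℤ` (so
`ε² = 0`). The endomorphism ring, in the homotopy category `K(Mod R)`, of the complex `C`
which is `R` in every degree with all differentials given by multiplication by `ε`, is
isomorphic as a ring to `𝔽_p`; in particular it is a one-dimensional `𝔽_p`-vector space. -/
theorem statement9 (p : ℕ) [Fact p.Prime] :
    Nonempty
      (End ((HomotopyCategory.quotient (ModuleCat (DualNumber (ZMod p)))
          (ComplexShape.up ℤ)).obj
        (Cx (DualNumber (ZMod p)) ε eps_mul_eps)) ≃+* ZMod p) :=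
  statement9_general p

end Paper9
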